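/- Let μ ∈ ℂ. Then every function ψ : ℂ → ℂ that is twice complex differentiable on ℂ and satisfies −ψ''(η) + η²·ψ(η) = (μ + 2)·ψ(η) for all η ∈ ℂ is of the form ψ(η) = e^{−η²/2}·[ c̃₁·M(−(1+μ)/4, 1/2, η²) + c̃₂·η·M((1−μ)/4, 3/2, η²) ] for some constants c̃₁, c̃₂ ∈ ℂ. -/

import Mathlib

/-
Conjugating by the Gaussian, `φ η = exp (η ^ 2 / 2) * ψ η` solves the Hermite-type equation
`φ'' = 2 η φ' - (μ + 1) φ`. Differentiating it `n` times at `0` gives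
`φ⁽ⁿ⁺²⁾(0) = (2 n - μ - 1) φ⁽ⁿ⁾(0)`, which is `4 (k + α) φ⁽ⁿ⁾(0)` for `n = 2k` with
`α = -(1 + μ) / 4` and for `n = 2k + 1` with `α = (1 - μ) / 4`. So the even and odd Taylor
coefficients of the entire function `φ` are Pochhammer products, and since
`(2k)! = 4ᵏ (1/2)ₖ k!` and `(2k+1)! = 4ᵏ (3/2)ₖ k!`, the two halves of its Taylor series are
the Kummer series in `η ^ 2`.
-/

open Complex

/-- Rising Pochhammer symbol in `ℂ`. -/
noncomputable def pochC (x : ℂ) (n : ℕ) : ℂ := ∏ i ∈ Finset.range n, (x + (i : ℂ))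

/-- Kummer's confluent hypergeometric function of the first kind. -/
noncomputable def kummerM (a c ζ : ℂ) : ℂ :=
  ∑' n : ℕ, pochC a n / pochC c n * ζ ^ n / (n.factorial : ℂ)

open scoped ContDiff

lemma pochC_succ (x : ℂ) (n : ℕ) : pochC x (n + 1) = pochC x n * (x + n) :=
  Finset.prod_range_succ _ _

lemma eq_mul_pow_mul_pochC_of_succ {b : ℕ → ℂ} {c α : ℂ}
    (hb : ∀ k : ℕ, b (k + 1) = c * (α + k) * b k) (k : ℕ) :
    b k = b 0 * c ^ k * pochC α k := by
  induction k with
  | zero => simp [pochC]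
  | succ k ih => rw [hb, ih, pochC_succ, pow_succ]; ring

lemma factorial_two_mul_eq (k : ℕ) :
    (((2 * k).factorial : ℕ) : ℂ) = 4 ^ k * (pochC (1 / 2) k * k.factorial) := by
  induction k with
  | zero => simp [pochC]
  | succ k ih =>
    rw [show 2 * (k + 1) = 2 * k + 1 + 1 by ring, Nat.factorial_succ (2 * k + 1),
      Nat.factorial_succ (2 * k), Nat.factorial_succ k, pochC_succ]
    push_cast
    rw [ih]
    ring

lemma factorial_two_mul_add_one_eq (k : ℕ) :
    (((2 * k + 1).factorial : ℕ) : ℂ) = 4 ^ k * (pochC (3 / 2) k * k.factorial) := by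
  induction k with
  | zero => simp [pochC]
  | succ k ih =>
    rw [show 2 * (k + 1) + 1 = 2 * k + 1 + 1 + 1 by ring, Nat.factorial_succ (2 * k + 1 + 1),
      Nat.factorial_succ (2 * k + 1), Nat.factorial_succ k, pochC_succ]
    push_cast
    rw [ih]
    ring

section IteratedDeriv

variable {𝕜 : Type*} [NontriviallyNormedField 𝕜]

lemma iteratedDeriv_id_mul_deriv_zero {f : 𝕜 → 𝕜} (hf : ContDiff 𝕜 ∞ f) (n : ℕ) :
    iteratedDeriv n (fun z => z * deriv f z) 0 = n * iteratedDeriv n f 0 := by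
  have hf' : ContDiff 𝕜 ∞ (deriv f) := (contDiff_infty_iff_deriv.mp hf).2
  rw [iteratedDeriv_fun_mul (f := fun z => z) contDiffAt_fun_id
    (hf'.contDiffAt.of_le (by exact_mod_cast le_top))]
  simp only [iteratedDeriv_fun_id_zero]
  cases n with
  | zero => simp
  | succ n => simp [Finset.sum_ite_eq', iteratedDeriv_succ']

lemma iteratedDeriv_add_two_zero_of_hermite {f : 𝕜 → 𝕜} (hf : ContDiff 𝕜 ∞ f) {c : 𝕜}
    (hode : ∀ z, deriv (deriv f) z = 2 * z * deriv f z - c * f z) (n : ℕ) :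
    iteratedDeriv (n + 2) f 0 = (2 * n - c) * iteratedDeriv n f 0 := by
  have hf' : ContDiff 𝕜 ∞ (deriv f) := (contDiff_infty_iff_deriv.mp hf).2
  have hode' : deriv (deriv f) = fun z => 2 * (z * deriv f z) - c * f z := by
    funext z; rw [hode]; ring
  have hn : (n : WithTop ℕ∞) ≤ ∞ := by exact_mod_cast le_top
  have hfn := hf.of_le hn
  have hf'n := hf'.of_le hn
  rw [iteratedDeriv_succ', iteratedDeriv_succ', hode', iteratedDeriv_fun_sub,
    iteratedDeriv_const_mul_field, iteratedDeriv_const_mul_field,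
    iteratedDeriv_id_mul_deriv_zero hf]
  · ring
  all_goals fun_prop

end IteratedDeriv

lemma hasDerivAt_exp_sq_half (z : ℂ) :
    HasDerivAt (fun z => exp (z ^ 2 / 2)) (z * exp (z ^ 2 / 2)) z := by
  have hq : HasDerivAt (fun z : ℂ => z ^ 2 / 2) z z := by
    simpa using (hasDerivAt_pow 2 z).div_const 2
  simpa [mul_comm] using hq.cexp

lemma deriv_deriv_exp_sq_half_mul {ψ : ℂ → ℂ} {μ : ℂ} (hψ : Differentiable ℂ ψ)
    (hode : ∀ z, -(deriv (deriv ψ) z) + z ^ 2 * ψ z = (μ + 2) * ψ z) (z : ℂ) :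
    deriv (deriv fun z => exp (z ^ 2 / 2) * ψ z) z
      = 2 * z * deriv (fun z => exp (z ^ 2 / 2) * ψ z) z
        - (μ + 1) * (exp (z ^ 2 / 2) * ψ z) := by
  have hψ' : Differentiable ℂ (deriv ψ) := hψ.deriv
  have hderiv : deriv (fun z => exp (z ^ 2 / 2) * ψ z)
      = fun z => exp (z ^ 2 / 2) * (z * ψ z + deriv ψ z) := by
    funext z
    rw [((hasDerivAt_exp_sq_half z).fun_mul (hψ z).hasDerivAt).deriv]
    ring
  have hinner : HasDerivAt (fun z => z * ψ z + deriv ψ z)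
      (ψ z + z * deriv ψ z + deriv (deriv ψ) z) z := by
    simpa using ((hasDerivAt_id' z).fun_mul (hψ z).hasDerivAt).fun_add (hψ' z).hasDerivAt
  rw [hderiv, ((hasDerivAt_exp_sq_half z).fun_mul hinner).deriv]
  linear_combination (-exp (z ^ 2 / 2)) * hode z

lemma eq_kummerM_of_iteratedDeriv_zero {f : ℂ → ℂ} (hf : Differentiable ℂ f) {A B a b : ℂ}
    (heven : ∀ k : ℕ, iteratedDeriv (2 * k) f 0 = A * 4 ^ k * pochC a k)
    (hodd : ∀ k : ℕ, iteratedDeriv (2 * k + 1) f 0 = B * 4 ^ k * pochC b k) (z : ℂ) :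
    f z = A * kummerM a (1 / 2) (z ^ 2) + B * z * kummerM b (3 / 2) (z ^ 2) := by
  set t : ℕ → ℂ := fun n => ((n.factorial : ℕ) : ℂ)⁻¹ * (z ^ n * iteratedDeriv n f 0)
  have hsum : HasSum t (f z) := by
    simpa [t, smul_eq_mul] using Complex.hasSum_taylorSeries_of_entire hf 0 z
  have ht_even (k : ℕ) : t (2 * k)
      = A * (pochC a k / pochC (1 / 2) k * (z ^ 2) ^ k / k.factorial) := by
    simp only [t, heven, factorial_two_mul_eq, pow_mul]
    field_simp
  have ht_odd (k : ℕ) : t (2 * k + 1)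
      = B * z * (pochC b k / pochC (3 / 2) k * (z ^ 2) ^ k / k.factorial) := by
    simp only [t, hodd, factorial_two_mul_add_one_eq]
    rw [pow_succ, pow_mul]
    field_simp
  rw [← hsum.tsum_eq,
    ← tsum_even_add_odd (hsum.summable.comp_injective fun a b hab => by omega)
      (hsum.summable.comp_injective fun a b hab => by omega)]
  simp only [ht_even, ht_odd, tsum_mul_left, kummerM]

theorem statement19_general (μ : ℂ) (ψ : ℂ → ℂ)
    (h1 : Differentiable ℂ ψ)
    (hODE : ∀ η : ℂ, -(deriv (deriv ψ) η) + η ^ 2 * ψ η = (μ + 2) * ψ η) :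
    ∃ c₁ c₂ : ℂ, ∀ η : ℂ,
      ψ η = Complex.exp (-η ^ 2 / 2) *
        (c₁ * kummerM (-(1 + μ) / 4) (1 / 2) (η ^ 2)
          + c₂ * η * kummerM ((1 - μ) / 4) (3 / 2) (η ^ 2)) := by
  set φ : ℂ → ℂ := fun z => exp (z ^ 2 / 2) * ψ z
  have hφ : Differentiable ℂ φ := by fun_prop
  have hrec :=
    iteratedDeriv_add_two_zero_of_hermite hφ.contDiff (deriv_deriv_exp_sq_half_mul h1 hODE)
  have heven (k : ℕ) : iteratedDeriv (2 * k) φ 0 = φ 0 * 4 ^ k * pochC (-(1 + μ) / 4) k := by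
    refine (eq_mul_pow_mul_pochC_of_succ (c := 4) (α := -(1 + μ) / 4)
      (b := fun k => iteratedDeriv (2 * k) φ 0) (fun k => ?_) k).trans ?_
    · rw [mul_add_one, hrec]; push_cast; ring
    · simp
  have hodd (k : ℕ) :
      iteratedDeriv (2 * k + 1) φ 0 = deriv φ 0 * 4 ^ k * pochC ((1 - μ) / 4) k := by
    refine (eq_mul_pow_mul_pochC_of_succ (c := 4) (α := (1 - μ) / 4)
      (b := fun k => iteratedDeriv (2 * k + 1) φ 0) (fun k => ?_) k).trans ?_
    · rw [show 2 * (k + 1) + 1 = 2 * k + 1 + 2 by ring, hrec]; push_cast; ring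
    · simp
  refine ⟨φ 0, deriv φ 0, fun η => ?_⟩
  rw [← eq_kummerM_of_iteratedDeriv_zero hφ heven hodd η]
  simp only [φ, ← mul_assoc, ← exp_add, neg_div, neg_add_cancel, exp_zero, one_mul]

theorem statement19 (μ : ℂ) (ψ : ℂ → ℂ)
    (h1 : Differentiable ℂ ψ)
    (h2 : Differentiable ℂ (deriv ψ))
    (hODE : ∀ η : ℂ, -(deriv (deriv ψ) η) + η ^ 2 * ψ η = (μ + 2) * ψ η) :
    ∃ c₁ c₂ : ℂ, ∀ η : ℂ,
      ψ η = Complex.exp (-η ^ 2 / 2) *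
        (c₁ * kummerM (-(1 + μ) / 4) (1 / 2) (η ^ 2)
          + c₂ * η * kummerM ((1 - μ) / 4) (3 / 2) (η ^ 2)) :=
  statement19_general μ ψ h1 hODE
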